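/- For a bounded linear operator T on a complex Hilbert space, w(T) ≥ √(‖Im(T)‖² + m(Re(T))²), where m(S) = inf{|⟨Sx,x⟩| : ‖x‖ = 1}, Re(T) = (T+T*)/2 and Im(T) = (T−T*)/(2i). -/

import Mathlib

open Complex

variable {H : Type*} [NormedAddCommGroup H] [InnerProductSpace ℂ H] [CompleteSpace H]

/-- The numerical radius `w(T) = sup {|⟨Tx,x⟩| : ‖x‖ = 1}`. -/
noncomputable def numRadius (T : H →L[ℂ] H) : ℝ :=
  sSup {r : ℝ | ∃ x : H, ‖x‖ = 1 ∧ r = ‖(inner ℂ (T x) x : ℂ)‖}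

/-- The Crawford number `m(T) = inf {|⟨Tx,x⟩| : ‖x‖ = 1}`. -/
noncomputable def crawford (T : H →L[ℂ] H) : ℝ :=
  sInf {r : ℝ | ∃ x : H, ‖x‖ = 1 ∧ r = ‖(inner ℂ (T x) x : ℂ)‖}

/-- The real part `Re(T) = (T + T*)/2`. -/
noncomputable def reOp (T : H →L[ℂ] H) : H →L[ℂ] H := (2 : ℂ)⁻¹ • (T + star T)

/-- The imaginary part `Im(T) = (T - T*)/(2i)`. -/
noncomputable def imOp (T : H →L[ℂ] H) : H →L[ℂ] H := (2 * Complex.I)⁻¹ • (T - star T)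
/-!
For a unit vector `x` write `⟨Tx, x⟩ = a + i b`. Then `a` is the quadratic form of `Re T` at `x`,
so `|a| ≥ m(Re T)`, and `b` is, up to sign, the quadratic form of `Im T` at `x`. Hence
`b² + m(Re T)² ≤ |⟨Tx, x⟩|² ≤ w(T)²`. Since `Im T` is self-adjoint, `‖Im T‖` is the supremum of
`|b|` over unit vectors, which gives `‖Im T‖² + m(Re T)² ≤ w(T)²`.
-/

open ContinuousLinearMap

section

variable {E : Type*} [NormedAddCommGroup E] [InnerProductSpace ℂ E]

lemma bddAbove_norm_inner_apply_self (T : E →L[ℂ] E) :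
    BddAbove {r : ℝ | ∃ x : E, ‖x‖ = 1 ∧ r = ‖(inner ℂ (T x) x : ℂ)‖} := by
  refine ⟨‖T‖, ?_⟩
  rintro r ⟨x, hx, rfl⟩
  calc ‖(inner ℂ (T x) x : ℂ)‖ ≤ ‖T x‖ * ‖x‖ := norm_inner_le_norm _ _
    _ ≤ ‖T‖ * ‖x‖ * ‖x‖ := by gcongr; exact T.le_opNorm x
    _ = ‖T‖ := by rw [hx, mul_one, mul_one]

lemma norm_inner_apply_self_le_numRadius (T : E →L[ℂ] E) {x : E} (hx : ‖x‖ = 1) :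
    ‖inner ℂ (T x) x‖ ≤ numRadius T :=
  le_csSup (bddAbove_norm_inner_apply_self T) ⟨x, hx, rfl⟩

lemma numRadius_nonneg (T : E →L[ℂ] E) : 0 ≤ numRadius T :=
  Real.sSup_nonneg (by rintro r ⟨x, -, rfl⟩; positivity)

lemma crawford_nonneg (T : E →L[ℂ] E) : 0 ≤ crawford T :=
  Real.sInf_nonneg (by rintro r ⟨x, -, rfl⟩; positivity)

lemma crawford_le_norm_inner_apply_self (T : E →L[ℂ] E) {x : E} (hx : ‖x‖ = 1) :
    crawford T ≤ ‖inner ℂ (T x) x‖ :=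
  csInf_le ⟨0, by rintro r ⟨y, -, rfl⟩; positivity⟩ ⟨x, hx, rfl⟩

end

lemma inner_star_apply_self (T : H →L[ℂ] H) (x : H) :
    inner ℂ (star T x) x = starRingEnd ℂ (inner ℂ (T x) x) := by
  rw [star_eq_adjoint, adjoint_inner_left, inner_conj_symm]

lemma inner_reOp_apply_self (T : H →L[ℂ] H) (x : H) :
    inner ℂ (reOp T x) x = ((inner ℂ (T x) x).re : ℂ) := by
  simp only [reOp, smul_apply, add_apply, inner_smul_left, inner_add_left, inner_star_apply_self,
    Complex.add_conj]
  simp [Complex.conj_ofNat]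

lemma re_inner_imOp_apply_self (T : H →L[ℂ] H) (x : H) :
    (inner ℂ (imOp T x) x).re = -(inner ℂ (T x) x).im := by
  simp only [imOp, smul_apply, sub_apply, inner_smul_left, inner_sub_left, inner_star_apply_self,
    Complex.sub_conj]
  simp

lemma isSelfAdjoint_imOp (T : H →L[ℂ] H) : IsSelfAdjoint (imOp T) := by
  rw [imOp, IsSelfAdjoint, star_smul, star_sub, star_star, ← neg_sub, smul_neg, ← neg_smul]
  congr 1
  simp

lemma im_inner_sq_add_crawford_reOp_sq_le (T : H →L[ℂ] H) {x : H} (hx : ‖x‖ = 1) :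
    (inner ℂ (T x) x).im ^ 2 + crawford (reOp T) ^ 2 ≤ numRadius T ^ 2 := by
  set a := inner ℂ (T x) x
  have hre : crawford (reOp T) ≤ |a.re| := by
    simpa [inner_reOp_apply_self] using crawford_le_norm_inner_apply_self (reOp T) hx
  calc a.im ^ 2 + crawford (reOp T) ^ 2 ≤ a.im ^ 2 + |a.re| ^ 2 := by
        gcongr
        exact crawford_nonneg _
    _ = ‖a‖ ^ 2 := by rw [sq_abs, Complex.sq_norm, Complex.normSq_apply]; ring
    _ ≤ numRadius T ^ 2 := by gcongr; exact norm_inner_apply_self_le_numRadius T hx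

lemma crawford_reOp_le_numRadius (T : H →L[ℂ] H) : crawford (reOp T) ≤ numRadius T := by
  rcases Set.eq_empty_or_nonempty {r : ℝ | ∃ x : H, ‖x‖ = 1 ∧ r = ‖inner ℂ (reOp T x) x‖}
    with hempty | ⟨_, x, hx, -⟩
  · rw [crawford, hempty, Real.sInf_empty]
    exact numRadius_nonneg T
  · refine (pow_le_pow_iff_left₀ (crawford_nonneg _) (numRadius_nonneg T) two_ne_zero).1 ?_
    linarith [im_inner_sq_add_crawford_reOp_sq_le T hx, sq_nonneg (inner ℂ (T x) x).im]

lemma norm_imOp_sq_le (T : H →L[ℂ] H) :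
    ‖imOp T‖ ^ 2 ≤ numRadius T ^ 2 - crawford (reOp T) ^ 2 := by
  have hgap : 0 ≤ numRadius T ^ 2 - crawford (reOp T) ^ 2 := by
    nlinarith [crawford_reOp_le_numRadius T, crawford_nonneg (reOp T)]
  refine (Real.le_sqrt (norm_nonneg _) hgap).1 ?_
  rw [norm_eq_iSup_rayleighQuotient _ (isSelfAdjoint_imOp T).isSymmetric]
  refine ciSup_le fun x ↦ ?_
  rcases eq_or_ne x 0 with rfl | hx
  · simp
  have hu : ‖(‖x‖ : ℂ)⁻¹ • x‖ = 1 := norm_smul_inv_norm hx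
  rw [← rayleigh_smul _ x (c := (‖x‖ : ℂ)⁻¹) (by simpa using hx), rayleighQuotient,
    reApplyInnerSelf_apply, hu, one_pow, div_one, RCLike.re_to_complex, re_inner_imOp_apply_self]
  refine Real.abs_le_sqrt ?_
  rw [neg_sq]
  linarith [im_inner_sq_add_crawford_reOp_sq_le T hu]

theorem stmt11 (T : H →L[ℂ] H) :
    numRadius T ≥ Real.sqrt (‖imOp T‖ ^ 2 + crawford (reOp T) ^ 2) := by
  rw [ge_iff_le, Real.sqrt_le_left (numRadius_nonneg T)]
  linarith [norm_imOp_sq_le T]
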